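/- Let $T_\epsilon f = \sum_{m \ge 0} (-1)^m (\mathbb{E}_m f - \mathbb{E}_{m-1} f)$ with $\mathbb{E}_{-1} = 0$, where $\mathbb{E}_m$ is the dyadic conditional expectation. Then for every even $n \ge 0$, $T_\epsilon \chi_{I_n} + \chi_{I_n} = 2^{-n} \sum_{k=0}^{n-1} \chi_{I_k} \cdot \frac{(-1)^k 2^{k+1} + 1}{3} + 2^{-n} \sum_{k=n}^{\infty} \chi_{I_k} \cdot \frac{2^{n+1}+1}{3}$, where $I_k = (2^{-k-1},2^{-k})$. -/

import Mathlib

open MeasureTheory Set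

noncomputable section

def m01 : Measure ℝ := volume.restrict (Ioo (0:ℝ) 1)

def rearr (x : ℝ → ℝ) (t : ℝ) : ℝ :=
  sInf {s : ℝ | 0 ≤ s ∧ m01 {u | s < |x u|} ≤ ENNReal.ofReal t}

def dil (s : ℝ) (y : ℝ → ℝ) (t : ℝ) : ℝ :=
  if t / s ∈ Icc (0:ℝ) 1 then y (t / s) else 0

def In (n : ℕ) : Set ℝ := Ioo (((2:ℝ)^(n+1))⁻¹) (((2:ℝ)^n)⁻¹)

def Jn (n : ℕ) : Set ℝ := Ioo 0 (((2:ℝ)^n)⁻¹)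

def haarH (n : ℕ) : ℝ → ℝ := fun t => indicator (Jn (n+1)) 1 t - indicator (In n) 1 t

def Eset : Set ℝ := ⋃ j : ℕ, In (2*j)

def hardyC (y : ℝ → ℝ) (t : ℝ) : ℝ := (1/t) * ∫ s in Ioo (0:ℝ) t, y s

def hardyCstar (y : ℝ → ℝ) (t : ℝ) : ℝ := ∫ s in Ioo t 1, y s / s

def calderon (y : ℝ → ℝ) (t : ℝ) : ℝ := hardyC y t + hardyCstar y t

def dyadicSA (m : ℕ) : MeasurableSpace ℝ :=
  MeasurableSpace.generateFrom
    {A | ∃ j : ℕ, 1 ≤ j ∧ j ≤ 2^m ∧ A = Ioo ((j-1 : ℝ)/2^m) ((j:ℝ)/2^m)}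

def condE (m : ℕ) (f : ℝ → ℝ) : ℝ → ℝ := m01[f | dyadicSA m]

def condEprev (m : ℕ) (f : ℝ → ℝ) : ℝ → ℝ := if m = 0 then 0 else condE (m-1) f

def Tmart (f : ℝ → ℝ) : ℝ → ℝ :=
  fun t => ∑' m : ℕ, if Even m then condE m f t - condEprev m f t else 0

def Teps (f : ℝ → ℝ) : ℝ → ℝ :=
  fun t => ∑' m : ℕ, (-1:ℝ)^m * (condE m f t - condEprev m f t)

/-
For `m ≤ n` the conditional expectation `𝔼_m χ_{I_n}` is `2^(m-n-1) χ_{J_m}`, where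
`J_m = (0, 2^{-m})` is the level-`m` dyadic atom containing `I_n`; for `m > n` the set `I_n`
is a union of level-`m` atoms up to finitely many points, so `𝔼_m χ_{I_n} = χ_{I_n}`. Hence
the martingale differences vanish beyond `m = n + 1`, and at a point of `I_k` the alternating
series collapses to a geometric sum of ratio `-2` over `m ≤ min n k`.
-/

open MeasureTheory Set Filter

def dyadicInterval (m j : ℕ) : Set ℝ := Ioo (((j : ℝ) - 1) / 2 ^ m) (j / 2 ^ m)

def dyadicIntervals (m : ℕ) : Set (Set ℝ) :=
  {A | ∃ j : ℕ, 1 ≤ j ∧ j ≤ 2 ^ m ∧ A = dyadicInterval m j}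

theorem dyadicSA_eq_generateFrom (m : ℕ) :
    dyadicSA m = MeasurableSpace.generateFrom (dyadicIntervals m) := rfl

theorem measurableSet_dyadicInterval {m j : ℕ} (hj₁ : 1 ≤ j) (hj : j ≤ 2 ^ m) :
    MeasurableSet[dyadicSA m] (dyadicInterval m j) :=
  MeasurableSpace.measurableSet_generateFrom ⟨j, hj₁, hj, rfl⟩

theorem dyadicSA_le (m : ℕ) : dyadicSA m ≤ Real.measurableSpace :=
  MeasurableSpace.generateFrom_le <| by
    rintro _ ⟨j, -, -, rfl⟩
    exact measurableSet_Ioo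

theorem disjoint_dyadicInterval {m i j : ℕ} (hij : i ≠ j) :
    Disjoint (dyadicInterval m i) (dyadicInterval m j) := by
  wlog hlt : i < j generalizing i j
  · exact (this hij.symm (lt_of_le_of_ne (not_lt.1 hlt) hij.symm)).symm
  have hij' : (i : ℝ) ≤ j - 1 := by
    have : (i : ℝ) + 1 ≤ j := by exact_mod_cast hlt
    linarith
  have : (i : ℝ) / 2 ^ m ≤ (j - 1) / 2 ^ m := by gcongr
  exact Set.disjoint_left.2 fun x hi hj => by linarith [hi.2, hj.1]

theorem isPiSystem_dyadicIntervals (m : ℕ) : IsPiSystem (dyadicIntervals m) := by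
  rintro _ ⟨i, hi₁, hi, rfl⟩ _ ⟨j, -, -, rfl⟩ hne
  obtain rfl : i = j := by
    by_contra hij
    exact hne.ne_empty (disjoint_dyadicInterval hij).inter_eq
  rw [inter_self]
  exact ⟨i, hi₁, hi, rfl⟩

theorem ae_eq_condExp_dyadicSA {μ : Measure ℝ} [IsFiniteMeasure μ] {m : ℕ} {f g : ℝ → ℝ}
    (hf : Integrable f μ) (hg : Integrable g μ) (hgm : StronglyMeasurable[dyadicSA m] g)
    (huniv : ∫ x, g x ∂μ = ∫ x, f x ∂μ)
    (hgen : ∀ A ∈ dyadicIntervals m, ∫ x in A, g x ∂μ = ∫ x in A, f x ∂μ) :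
    g =ᵐ[μ] μ[f | dyadicSA m] := by
  suffices hset : ∀ s, MeasurableSet[dyadicSA m] s → ∫ x in s, g x ∂μ = ∫ x in s, f x ∂μ from
    ae_eq_condExp_of_forall_setIntegral_eq (dyadicSA_le m) hf (fun _ _ _ => hg.integrableOn)
      (fun s hs _ => hset s hs) hgm.aestronglyMeasurable
  intro s hs
  induction s, hs using MeasurableSpace.induction_on_inter (dyadicSA_eq_generateFrom m)
    (isPiSystem_dyadicIntervals m) with
  | empty => simp
  | basic t ht => exact hgen t ht
  | compl t ht ih =>
    have hf' := integral_add_compl (dyadicSA_le m t ht) hf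
    have hg' := integral_add_compl (dyadicSA_le m t ht) hg
    linarith
  | iUnion s hd hs ih =>
    have hs' i := dyadicSA_le m _ (hs i)
    rw [integral_iUnion hs' hd hf.integrableOn, integral_iUnion hs' hd hg.integrableOn]
    exact tsum_congr ih

theorem exists_measurableSet_dyadicSA_ae_eq_Ioo {μ : Measure ℝ} [NullSingletonClass μ]
    (m : ℕ) {a b : ℕ} (hab : a ≤ b) (hb : b ≤ 2 ^ m) :
    ∃ U, MeasurableSet[dyadicSA m] U ∧ U =ᵐ[μ] Ioo ((a : ℝ) / 2 ^ m) (b / 2 ^ m) := by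
  induction b, hab using Nat.le_induction with
  | base => exact ⟨∅, (dyadicSA m).measurableSet_empty, by simp⟩
  | succ b hab ih =>
    obtain ⟨U, hU, hUe⟩ := ih (by omega)
    refine ⟨U ∪ dyadicInterval m (b + 1),
      hU.union (measurableSet_dyadicInterval (by omega) hb), ?_⟩
    have hsplit : Ioo ((a : ℝ) / 2 ^ m) ((b + 1 : ℕ) / 2 ^ m)
        = Ioc ((a : ℝ) / 2 ^ m) (b / 2 ^ m) ∪ dyadicInterval m (b + 1) := by
      rw [dyadicInterval, Nat.cast_succ, add_sub_cancel_right, Ioc_union_Ioo_eq_Ioo]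
      · gcongr
      · gcongr
        linarith
    rw [hsplit]
    exact (hUe.trans Ioo_ae_eq_Ioc).union EventuallyEq.rfl

instance : IsFiniteMeasure m01 := ⟨by simp [m01]⟩

instance : NullSingletonClass m01 := by
  unfold m01
  infer_instance

theorem Jn_zero : Jn 0 = Ioo 0 1 := by simp [Jn]

theorem Jn_antitone : Antitone Jn := fun _ _ h =>
  Ioo_subset_Ioo_right (inv_anti₀ (by positivity) (pow_le_pow_right₀ one_le_two h))

theorem In_subset_Jn (n : ℕ) : In n ⊆ Jn n := Ioo_subset_Ioo_left (by positivity)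

theorem disjoint_In_Jn_succ (n : ℕ) : Disjoint (In n) (Jn (n + 1)) :=
  Set.disjoint_left.2 fun _ hI hJ => lt_asymm hI.1 hJ.2

theorem Jn_eq_dyadicInterval (m : ℕ) : Jn m = dyadicInterval m 1 := by
  simp [Jn, dyadicInterval]

theorem measureReal_m01_of_subset {s : Set ℝ} (hs : s ⊆ Ioo 0 1) :
    m01.real s = volume.real s := by
  simp [Measure.real, m01, Measure.restrict_eq_self _ hs]

theorem measureReal_Jn (m : ℕ) : m01.real (Jn m) = ((2 : ℝ) ^ m)⁻¹ := by
  rw [measureReal_m01_of_subset (Jn_zero ▸ Jn_antitone m.zero_le), Jn,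
    Real.volume_real_Ioo_of_le (by positivity), sub_zero]

theorem measureReal_In (n : ℕ) : m01.real (In n) = ((2 : ℝ) ^ (n + 1))⁻¹ := by
  rw [measureReal_m01_of_subset (Jn_zero ▸ (In_subset_Jn n).trans (Jn_antitone n.zero_le)), In,
    Real.volume_real_Ioo_of_le (by gcongr <;> norm_num)]
  field_simp
  ring

theorem setIntegral_indicator_one {α : Type*} [MeasurableSpace α] {μ : Measure α} {s : Set α}
    (hs : MeasurableSet s) (A : Set α) :
    ∫ x in A, s.indicator (1 : α → ℝ) x ∂μ = μ.real (s ∩ A) := by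
  rw [integral_indicator_one hs, measureReal_restrict_apply hs]

theorem integrable_indicator_one {α : Type*} [MeasurableSpace α] {μ : Measure α}
    [IsFiniteMeasure μ] {s : Set α} (hs : MeasurableSet s) :
    Integrable (s.indicator (1 : α → ℝ)) μ :=
  (integrable_const (1 : ℝ)).indicator hs

theorem condE_indicator_In_of_le {m n : ℕ} (hmn : m ≤ n) :
    condE m ((In n).indicator 1) =ᵐ[m01]
      fun t => 2 ^ m / 2 ^ (n + 1) * (Jn m).indicator 1 t := by
  have hI : MeasurableSet (In n) := measurableSet_Ioo
  have hJ : MeasurableSet (Jn m) := measurableSet_Ioo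
  have hIJ : In n ⊆ Jn m := (In_subset_Jn n).trans (Jn_antitone hmn)
  have hmass : (2 : ℝ) ^ m / 2 ^ (n + 1) * m01.real (Jn m) = m01.real (In n) := by
    rw [measureReal_Jn, measureReal_In]
    field_simp
  refine (ae_eq_condExp_dyadicSA (integrable_indicator_one hI)
    ((integrable_indicator_one hJ).const_mul _)
    ((stronglyMeasurable_one.indicator (Jn_eq_dyadicInterval m ▸
      measurableSet_dyadicInterval le_rfl Nat.one_le_two_pow)).const_mul _) ?_ ?_).symm
  · rw [integral_const_mul, integral_indicator_one hJ, integral_indicator_one hI, hmass]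
  · rintro _ ⟨j, -, -, rfl⟩
    rw [integral_const_mul, setIntegral_indicator_one hJ, setIntegral_indicator_one hI]
    obtain rfl | hj := eq_or_ne j 1
    · rw [← Jn_eq_dyadicInterval, inter_self, inter_eq_left.2 hIJ, hmass]
    · have hdisj : Disjoint (Jn m) (dyadicInterval m j) :=
        Jn_eq_dyadicInterval m ▸ disjoint_dyadicInterval hj.symm
      rw [hdisj.inter_eq, (hdisj.mono_left hIJ).inter_eq]
      simp

theorem condE_indicator_In_of_lt {m n : ℕ} (hnm : n < m) :
    condE m ((In n).indicator 1) =ᵐ[m01] (In n).indicator 1 := by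
  obtain ⟨d, rfl⟩ : ∃ d, m = n + 1 + d := ⟨m - (n + 1), by omega⟩
  have hIn : In n =
      Ioo (((2 ^ d : ℕ) : ℝ) / 2 ^ (n + 1 + d)) ((2 ^ (d + 1) : ℕ) / 2 ^ (n + 1 + d)) := by
    simp only [In, Nat.cast_pow, Nat.cast_ofNat]
    congr 1 <;> field_simp <;> ring
  obtain ⟨U, hU, hUe⟩ := exists_measurableSet_dyadicSA_ae_eq_Ioo (μ := m01) (n + 1 + d)
    (Nat.pow_le_pow_right two_pos d.le_succ) (Nat.pow_le_pow_right two_pos (by omega))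
  rw [← hIn] at hUe
  exact condExp_of_aestronglyMeasurable' (dyadicSA_le _)
    ⟨U.indicator 1, stronglyMeasurable_one.indicator hU, indicator_ae_eq_of_ae_eq_set hUe.symm⟩
    (integrable_indicator_one measurableSet_Ioo)

theorem ae_exists_mem_In : ∀ᵐ t ∂m01, ∃ k, t ∈ In k := by
  have hnull : m01 (range fun k : ℕ => ((2 : ℝ) ^ k)⁻¹) = 0 := (countable_range _).measure_zero _
  filter_upwards [measure_eq_zero_iff_ae_notMem.1 hnull, ae_restrict_mem measurableSet_Ioo]
    with t hne ht
  obtain ⟨k, hk, hk'⟩ :=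
    exists_nat_pow_near_of_lt_one ht.1 ht.2.le (by norm_num : (0 : ℝ) < 2⁻¹) (by norm_num)
  rw [inv_pow] at hk hk'
  exact ⟨k, hk, hk'.lt_of_ne fun h => hne ⟨k, h.symm⟩⟩

theorem indicator_one_apply_of_mem_iff {α M : Type*} [Zero M] [One M] {s : Set α} {a : α}
    {p : Prop} [Decidable p] (h : a ∈ s ↔ p) : s.indicator (1 : α → M) a = if p then 1 else 0 := by
  by_cases hp : p
  · rw [if_pos hp, indicator_of_mem (h.2 hp), Pi.one_apply]
  · rw [if_neg hp, indicator_of_notMem (mt h.1 hp)]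

theorem mem_Jn_iff_of_mem_In {t : ℝ} {k : ℕ} (ht : t ∈ In k) (m : ℕ) : t ∈ Jn m ↔ m ≤ k := by
  refine ⟨fun h => ?_, fun h => Jn_antitone h (In_subset_Jn k ht)⟩
  by_contra! hkm
  exact Set.disjoint_left.1 (disjoint_In_Jn_succ k) ht (Jn_antitone hkm h)

theorem mem_In_iff_of_mem_In {t : ℝ} {k : ℕ} (ht : t ∈ In k) (j : ℕ) : t ∈ In j ↔ j = k := by
  refine ⟨fun h => ?_, fun h => h ▸ ht⟩
  have hjk := (mem_Jn_iff_of_mem_In ht j).1 (In_subset_Jn j h)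
  have hkj := (mem_Jn_iff_of_mem_In h k).1 (In_subset_Jn k ht)
  omega

theorem condEprev_apply (m : ℕ) (f : ℝ → ℝ) (t : ℝ) :
    condEprev m f t = if m = 0 then 0 else condE (m - 1) f t := by
  unfold condEprev
  split_ifs <;> rfl

theorem sum_range_succ_alternating_increments {R : Type*} [CommRing R] (a : ℕ → R) (N : ℕ) :
    ∑ m ∈ Finset.range (N + 1), (-1) ^ m * (a m - if m = 0 then 0 else a (m - 1))
      = 2 * ∑ m ∈ Finset.range N, (-1) ^ m * a m + (-1) ^ N * a N := by
  induction N with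
  | zero => simp
  | succ N ih =>
    rw [Finset.sum_range_succ, ih, Finset.sum_range_succ, if_neg N.succ_ne_zero,
      Nat.add_sub_cancel, pow_succ]
    ring

theorem tsum_alternating_increments {R : Type*} [CommRing R] [TopologicalSpace R]
    (a : ℕ → R) {N : ℕ} (ha : ∀ m, N ≤ m → a m = a N) :
    ∑' m, (-1) ^ m * (a m - if m = 0 then 0 else a (m - 1))
      = 2 * ∑ m ∈ Finset.range N, (-1) ^ m * a m + (-1) ^ N * a N := by
  rw [tsum_eq_sum (s := Finset.range (N + 1)), sum_range_succ_alternating_increments]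
  intro m hm
  rw [Finset.mem_range, not_lt] at hm
  rw [if_neg (by omega), ha m (by omega), ha (m - 1) (by omega), sub_self, mul_zero]

theorem Teps_indicator_In_add_ae_eq {n : ℕ} (hn : Even n) :
    (fun t => Teps ((In n).indicator 1) t + (In n).indicator 1 t) =ᵐ[m01]
      fun t => 2 * ∑ m ∈ Finset.range (n + 1),
        (-1 : ℝ) ^ m * (2 ^ m / 2 ^ (n + 1) * (Jn m).indicator 1 t) := by
  have hE : ∀ᵐ t ∂m01, ∀ m, condE m ((In n).indicator 1) t =
      if m ≤ n then 2 ^ m / 2 ^ (n + 1) * (Jn m).indicator 1 t else (In n).indicator 1 t := by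
    refine ae_all_iff.2 fun m => ?_
    split_ifs with hmn
    · exact condE_indicator_In_of_le hmn
    · exact condE_indicator_In_of_lt (not_le.1 hmn)
  filter_upwards [hE] with t hE
  have hconst : ∀ m, n + 1 ≤ m →
      condE m ((In n).indicator 1) t = condE (n + 1) ((In n).indicator 1) t := fun m hm => by
    rw [hE, hE, if_neg (by omega), if_neg (by omega)]
  simp only [Teps, condEprev_apply]
  rw [tsum_alternating_increments _ hconst, hE (n + 1), if_neg (by omega), hn.add_one.neg_one_pow,
    Finset.sum_congr rfl fun m hm => by
      rw [hE m, if_pos (Nat.lt_succ_iff.1 (Finset.mem_range.1 hm))]]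
  ring

theorem geom_sum_neg_two (j : ℕ) :
    ∑ m ∈ Finset.range (j + 1), (-2 : ℝ) ^ m = ((-1) ^ j * 2 ^ (j + 1) + 1) / 3 := by
  rw [geom_sum_eq (by norm_num), neg_pow, pow_succ]
  ring

theorem sum_indicator_Jn_of_mem_In {t : ℝ} {k : ℕ} (ht : t ∈ In k) (n : ℕ) :
    2 * ∑ m ∈ Finset.range (n + 1), (-1 : ℝ) ^ m * (2 ^ m / 2 ^ (n + 1) * (Jn m).indicator 1 t)
      = (2 : ℝ) ^ (-(n : ℤ)) * (((-1) ^ min n k * 2 ^ (min n k + 1) + 1) / 3) := by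
  have hfilter : (Finset.range (n + 1)).filter (· ≤ k) = Finset.range (min n k + 1) := by
    ext m
    simp only [Finset.mem_filter, Finset.mem_range]
    omega
  calc 2 * ∑ m ∈ Finset.range (n + 1), (-1 : ℝ) ^ m * (2 ^ m / 2 ^ (n + 1) * (Jn m).indicator 1 t)
      = 2 / 2 ^ (n + 1) * ∑ m ∈ Finset.range (n + 1), if m ≤ k then (-2 : ℝ) ^ m else 0 := by
        rw [Finset.mul_sum, Finset.mul_sum]
        refine Finset.sum_congr rfl fun m _ => ?_
        rw [indicator_one_apply_of_mem_iff (mem_Jn_iff_of_mem_In ht m), neg_pow (2 : ℝ) m]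
        split_ifs <;> ring
    _ = (2 : ℝ) ^ (-(n : ℤ)) * ∑ m ∈ Finset.range (min n k + 1), (-2 : ℝ) ^ m := by
        rw [← Finset.sum_filter, hfilter, zpow_neg, zpow_natCast, pow_succ]
        field_simp
    _ = _ := by rw [geom_sum_neg_two]

theorem sum_indicator_In_of_mem_In {n k : ℕ} {t : ℝ} (hn : Even n) (ht : t ∈ In k) :
    ∑ j ∈ Finset.range n, (In j).indicator 1 t * (((-1 : ℝ) ^ j * 2 ^ (j + 1) + 1) / 3)
      + ∑' j : ℕ, (if n ≤ j then (In j).indicator 1 t * (((2 : ℝ) ^ (n + 1) + 1) / 3) else 0)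
      = ((-1) ^ min n k * 2 ^ (min n k + 1) + 1) / 3 := by
  have hI j : (In j).indicator (1 : ℝ → ℝ) t = if j = k then 1 else 0 :=
    indicator_one_apply_of_mem_iff (mem_In_iff_of_mem_In ht j)
  rw [tsum_eq_single k fun j hj => by rw [hI, if_neg hj, zero_mul, ite_self]]
  simp only [hI, ite_mul, one_mul, zero_mul, Finset.sum_ite_eq', Finset.mem_range, if_true]
  rcases lt_or_ge k n with hkn | hnk
  · rw [if_pos hkn, if_neg hkn.not_ge, min_eq_right hkn.le, add_zero]
  · rw [if_neg hnk.not_gt, if_pos hnk, min_eq_left hnk, hn.neg_one_pow, zero_add, one_mul]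

theorem Teps_indicator_formula (n : ℕ) (hn : Even n) :
    (fun t => Teps (indicator (In n) 1) t + indicator (In n) 1 t) =ᵐ[m01]
      fun t => (2:ℝ)^(-(n:ℤ)) *
          (∑ k ∈ Finset.range n, indicator (In k) 1 t * (((-1:ℝ)^k * 2^(k+1) + 1)/3))
        + (2:ℝ)^(-(n:ℤ)) *
          (∑' k : ℕ, if n ≤ k then indicator (In k) 1 t * (((2:ℝ)^(n+1) + 1)/3) else 0) := by
  filter_upwards [Teps_indicator_In_add_ae_eq hn, ae_exists_mem_In] with t hLHS ⟨k, hk⟩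
  rw [hLHS, sum_indicator_Jn_of_mem_In hk, ← mul_add, sum_indicator_In_of_mem_In hn hk]
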